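/- Let N₁, N₂ be positive integers such that ℚ(ζ_{N₁} + ζ_{N₁}^{-1}) ⊆ ℚ(ζ_{N₂} + ζ_{N₂}^{-1}). Then either N₁ divides lcm(2, N₂), or N₁ ∈ {1, 2, 3, 4, 6}. -/

import Mathlib

/-!
Let `ζᵢ = exp(2πi/Nᵢ)` and `ζ = exp(2πi/(N₁N₂))`, so that `ζ^N₂ = ζ₁` and `ζ^N₁ = ζ₂`. If `a` is
prime to `N₁N₂` and `a ≡ 1 mod N₂`, then `ζ ↦ ζ^a` is a Galois automorphism of `ℚ(ζ)` fixing `ζ₂`,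
hence fixing `ℚ(ζ₂) ∋ ζ₁ + ζ₁⁻¹`; so `ζ₁^a + ζ₁^{-a} = ζ₁ + ζ₁⁻¹`, i.e. `a ≡ ±1 mod N₁`. Instead of
building the automorphism we move the polynomial relation expressing `ζ₁ + ζ₁⁻¹ ∈ ℚ(ζ₂)` from `ζ`
to its conjugate `ζ^a`, a root of the same cyclotomic polynomial.

If `N₁ ∤ lcm(2, N₂)`, pick `p` with `k = v_p(N₁) > j = v_p(lcm(2, N₂))` and use the Chinese
remainder theorem to get such an `a` with `a ≡ 1 + p^j` modulo the `p`-part of `N₁N₂` and `a ≡ 1`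
modulo the rest. Then `a ≢ 1 mod p^k`, so `a ≡ -1 mod N₁`: hence `p^k ∣ 2 + p^j`, which forces
`p^k ∈ {3, 4}`, and the prime-to-`p` part of `N₁` divides `2`.
-/

/-- The maximal totally real subfield `ℚ(ζ_N + ζ_N⁻¹)` of the `N`-th cyclotomic field,
inside `ℂ`, with `ζ_N = e^{2πi/N}`. -/
noncomputable def realCycloField (M : ℕ) : IntermediateField ℚ ℂ :=
  IntermediateField.adjoin ℚ
    {Complex.exp (2 * Real.pi * Complex.I / M) + (Complex.exp (2 * Real.pi * Complex.I / M))⁻¹}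

open Polynomial IntermediateField

theorem IsPrimitiveRoot.aeval_pow_eq_zero_of_coprime {K : Type*} [Field K] [CharZero K]
    {n a : ℕ} {ζ : K} (hζ : IsPrimitiveRoot ζ n) (hn : 0 < n) (ha : a.Coprime n) {P : ℚ[X]}
    (hP : aeval ζ P = 0) : aeval (ζ ^ a) P = 0 := by
  obtain ⟨Q, rfl⟩ : cyclotomic n ℚ ∣ P := cyclotomic_eq_minpoly_rat hζ hn ▸ minpoly.dvd ℚ ζ hP
  have hroot : aeval (ζ ^ a) (cyclotomic n ℚ) = 0 := by
    rw [aeval_def, eval₂_eq_eval_map, map_cyclotomic]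
    exact (hζ.pow_of_coprime a ha).isRoot_cyclotomic hn
  rw [map_mul, hroot, zero_mul]

theorem IsPrimitiveRoot.pow_eq_pow_iff_modEq {M : Type*} [CommMonoid M] {ζ : M} {n a b : ℕ}
    (hζ : IsPrimitiveRoot ζ n) (hn : n ≠ 0) : ζ ^ a = ζ ^ b ↔ a ≡ b [MOD n] := by
  rw [hζ.eq_orderOf]
  exact (hζ.isOfFinOrder hn).pow_eq_pow_iff_modEq

theorem exists_aeval_eq_of_mem_adjoin_simple {F E : Type*} [Field F] [Field E] [Algebra F E]
    {x y : E} (hx : IsAlgebraic F x) (hy : y ∈ F⟮x⟯) : ∃ f : F[X], aeval x f = y := by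
  rw [← mem_toSubalgebra, adjoin_simple_toSubalgebra_of_isAlgebraic hx,
    Algebra.adjoin_singleton_eq_range_aeval] at hy
  exact hy

theorem Complex.exp_two_pi_I_div_mul_pow (m n : ℕ) (hn : n ≠ 0) :
    exp (2 * Real.pi * I / (m * n : ℕ)) ^ n = exp (2 * Real.pi * I / m) := by
  rw [← exp_nat_mul]
  congr 1
  push_cast
  by_cases hm : (m : ℂ) = 0
  · simp [hm]
  field_simp

theorem realCycloField_le_adjoin (N : ℕ) :
    realCycloField N ≤ ℚ⟮Complex.exp (2 * Real.pi * Complex.I / N)⟯ :=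
  adjoin_simple_le_iff.mpr <|
    add_mem (mem_adjoin_simple_self ℚ _) (inv_mem (mem_adjoin_simple_self ℚ _))

theorem modEq_one_or_dvd_add_one_of_realCycloField_le {N₁ N₂ a : ℕ} (h₁ : 0 < N₁) (h₂ : 0 < N₂)
    (h : realCycloField N₁ ≤ realCycloField N₂) (ha : a.Coprime (N₁ * N₂))
    (haN₂ : a ≡ 1 [MOD N₂]) : a ≡ 1 [MOD N₁] ∨ N₁ ∣ a + 1 := by
  set ζ₁ := Complex.exp (2 * Real.pi * Complex.I / N₁)
  set ζ₂ := Complex.exp (2 * Real.pi * Complex.I / N₂)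
  set ζ := Complex.exp (2 * Real.pi * Complex.I / (N₁ * N₂ : ℕ))
  have hζ : IsPrimitiveRoot ζ (N₁ * N₂) := Complex.isPrimitiveRoot_exp _ (by positivity)
  have hζ₁ : IsPrimitiveRoot ζ₁ N₁ := Complex.isPrimitiveRoot_exp _ h₁.ne'
  have hζ₂ : IsPrimitiveRoot ζ₂ N₂ := Complex.isPrimitiveRoot_exp _ h₂.ne'
  have hζζ₁ : ζ ^ N₂ = ζ₁ := Complex.exp_two_pi_I_div_mul_pow N₁ N₂ h₂.ne'
  have hζζ₂ : ζ ^ N₁ = ζ₂ := by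
    simp only [ζ, mul_comm N₁ N₂]
    exact Complex.exp_two_pi_I_div_mul_pow N₂ N₁ h₁.ne'
  obtain ⟨f, hf⟩ : ∃ f : ℚ[X], aeval ζ₂ f = ζ₁ + ζ₁⁻¹ :=
    exists_aeval_eq_of_mem_adjoin_simple (hζ₂.isIntegral h₂).tower_top.isAlgebraic
      (realCycloField_le_adjoin N₂ (h (mem_adjoin_simple_self ℚ _)))
  have hζ₁0 : ζ₁ ≠ 0 := hζ₁.ne_zero h₁.ne'
  have hP : aeval ζ (X ^ (2 * N₂) + 1 - X ^ N₂ * f.comp (X ^ N₁)) = 0 := by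
    simp only [pow_mul', aeval_sub, map_add, map_pow, aeval_X, hζζ₁, map_one, map_mul, aeval_comp,
      hζζ₂, hf]
    field_simp
    ring
  have hPa := hζ.aeval_pow_eq_zero_of_coprime (by positivity) ha hP
  have hζ₂a : ζ₂ ^ a = ζ₂ := by
    simpa using (hζ₂.pow_eq_pow_iff_modEq h₂.ne').mpr haN₂
  simp only [pow_mul', aeval_sub, map_add, map_pow, aeval_X, pow_right_comm ζ a, hζζ₁, map_one,
    map_mul, aeval_comp, hζζ₂, hζ₂a, hf] at hPa
  have : (ζ₁ ^ a - ζ₁) * (ζ₁ ^ a * ζ₁ - 1) = 0 := by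
    linear_combination ζ₁ * hPa + ζ₁ ^ a * mul_inv_cancel₀ hζ₁0
  rcases mul_eq_zero.mp this with h | h
  · exact .inl ((hζ₁.pow_eq_pow_iff_modEq h₁.ne').mp (by simpa [sub_eq_zero] using h))
  · exact .inr ((hζ₁.pow_eq_one_iff_dvd _).mp (by rwa [pow_succ, ← sub_eq_zero]))

theorem Nat.exists_coprime_modEq_modEq {m₁ m₂ b : ℕ} (hm : m₁.Coprime m₂) (hb : b.Coprime m₁) :
    ∃ a, a.Coprime (m₁ * m₂) ∧ a ≡ b [MOD m₁] ∧ a ≡ 1 [MOD m₂] := by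
  obtain ⟨a, ha₁, ha₂⟩ := Nat.chineseRemainder hm b 1
  refine ⟨a, Nat.Coprime.mul_right ?_ ?_, ha₁, ha₂⟩
  · rwa [Nat.Coprime, ha₁.gcd_eq]
  · rw [Nat.Coprime, ha₂.gcd_eq, Nat.gcd_one_left]

theorem eq_three_or_four_of_dvd_two_add {q r : ℕ} (hrq : r ∣ q) (hlt : r < q) (hq : q ∣ 2 + r) :
    q = 3 ∨ q = 4 := by
  have hr : r ∣ 2 := (Nat.dvd_add_left (dvd_refl r)).mp (hrq.trans hq)
  have : r ≤ 2 := Nat.le_of_dvd two_pos hr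
  have : 0 < r := Nat.pos_of_dvd_of_pos hr two_pos
  have : q ≤ 2 + r := Nat.le_of_dvd (by omega) hq
  interval_cases r <;> interval_cases q <;> omega

theorem not_dvd_one_add_ordProj_lcm_two {N p : ℕ} (hp : p.Prime) (hN : N ≠ 0) :
    ¬ p ∣ 1 + ordProj[p] (Nat.lcm 2 N) := by
  rcases Nat.eq_zero_or_pos ((Nat.lcm 2 N).factorization p) with hj | hj
  · rw [hj, pow_zero]
    rintro hp2
    obtain rfl : p = 2 := (Nat.prime_dvd_prime_iff_eq hp Nat.prime_two).mp hp2
    have := (Nat.factorization_le_iff_dvd two_ne_zero (Nat.lcm_ne_zero two_ne_zero hN)).mpr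
      (Nat.dvd_lcm_left 2 N) 2
    simp_all
  · rw [Nat.dvd_add_left (dvd_pow_self p hj.ne')]
    exact hp.not_dvd_one

theorem ordProj_dvd_two_add_and_ordCompl_dvd_two {n N p : ℕ} (hn : 0 < n) (hN : 0 < N)
    (hp : p.Prime) (hlt : (Nat.lcm 2 N).factorization p < n.factorization p)
    (H : ∀ a, a.Coprime (n * N) → a ≡ 1 [MOD N] → a ≡ 1 [MOD n] ∨ n ∣ a + 1) :
    ordProj[p] n ∣ 2 + ordProj[p] (Nat.lcm 2 N) ∧ ordCompl[p] n ∣ 2 := by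
  set b := 1 + ordProj[p] (Nat.lcm 2 N)
  have hM : n * N ≠ 0 := by positivity
  have hs : Nat.lcm 2 N ≠ 0 := Nat.lcm_ne_zero two_ne_zero hN.ne'
  have hb : b.Coprime (ordProj[p] (n * N)) :=
    ((hp.coprime_iff_not_dvd.mpr (not_dvd_one_add_ordProj_lcm_two hp hN.ne')).symm).pow_right _
  obtain ⟨a, haM, hab, ha1⟩ :=
    Nat.exists_coprime_modEq_modEq ((Nat.coprime_ordCompl hp hM).pow_left _) hb
  rw [Nat.ordProj_mul_ordCompl_eq_self] at haM
  have hbn : a ≡ b [MOD ordProj[p] n] :=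
    hab.of_dvd (Nat.ordProj_dvd_ordProj_of_dvd hM (dvd_mul_right n N) p)
  have h1n : a ≡ 1 [MOD ordCompl[p] n] :=
    ha1.of_dvd (Nat.ordCompl_dvd_ordCompl_of_dvd (dvd_mul_right n N) p)
  have haN : a ≡ 1 [MOD N] := by
    rw [← Nat.ordProj_mul_ordCompl_eq_self N p,
      ← Nat.modEq_and_modEq_iff_modEq_mul ((Nat.coprime_ordCompl hp hN.ne').pow_left _)]
    constructor
    · refine (hab.of_dvd (Nat.ordProj_dvd_ordProj_of_dvd hM (dvd_mul_left N n) p)).trans ?_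
      refine (Nat.add_modulus_modEq_iff.mpr rfl).of_dvd (pow_dvd_pow p ?_)
      exact (Nat.factorization_le_iff_dvd hN.ne' hs).mpr (Nat.dvd_lcm_right 2 N) p
    · exact ha1.of_dvd (Nat.ordCompl_dvd_ordCompl_of_dvd (dvd_mul_left N n) p)
  rcases H a haM haN with h | h
  · have : ordProj[p] (Nat.lcm 2 N) ≡ 0 [MOD ordProj[p] n] :=
      Nat.ModEq.add_left_cancel' 1 (hbn.symm.trans (h.of_dvd (Nat.ordProj_dvd n p)))
    have := (Nat.pow_dvd_pow_iff_le_right hp.one_lt).mp (Nat.modEq_zero_iff_dvd.mp this)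
    omega
  · constructor
    · rw [show 2 + ordProj[p] (Nat.lcm 2 N) = b + 1 by omega]
      exact ((hbn.add_right 1).dvd_iff dvd_rfl).mp ((Nat.ordProj_dvd n p).trans h)
    · exact ((h1n.add_right 1).dvd_iff dvd_rfl).mp ((Nat.ordCompl_dvd n p).trans h)

theorem dvd_lcm_two_or_mem_of_forall_modEq {n N : ℕ} (hn : 0 < n) (hN : 0 < N)
    (H : ∀ a, a.Coprime (n * N) → a ≡ 1 [MOD N] → a ≡ 1 [MOD n] ∨ n ∣ a + 1) :
    n ∣ Nat.lcm 2 N ∨ n ∈ ({1, 2, 3, 4, 6} : Set ℕ) := by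
  refine or_iff_not_imp_left.mpr fun hdvd => ?_
  obtain ⟨p, hlt⟩ : ∃ p, (Nat.lcm 2 N).factorization p < n.factorization p := by
    simpa [← Nat.factorization_le_iff_dvd hn.ne' (Nat.lcm_ne_zero two_ne_zero hN.ne'),
      Finsupp.le_def] using hdvd
  have hp : p.Prime := by
    by_contra hp
    simp [Nat.factorization_eq_zero_of_not_prime _ hp] at hlt
  obtain ⟨hproj, hcompl⟩ := ordProj_dvd_two_add_and_ordCompl_dvd_two hn hN hp hlt H
  have hcop : (ordProj[p] n).Coprime (ordCompl[p] n) :=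
    (Nat.coprime_ordCompl hp hn.ne').pow_left _
  rw [← Nat.ordProj_mul_ordCompl_eq_self n p]
  rcases eq_three_or_four_of_dvd_two_add (pow_dvd_pow p hlt.le)
      (Nat.pow_lt_pow_right hp.one_lt hlt) hproj with h | h <;>
    rcases (Nat.dvd_prime Nat.prime_two).mp hcompl with h' | h' <;>
    rw [h', h] at hcop ⊢ <;> simp_all [Nat.odd_iff]

/-- If `ℚ(ζ_{N₁} + ζ_{N₁}⁻¹) ⊆ ℚ(ζ_{N₂} + ζ_{N₂}⁻¹)`, then either `N₁` divides `lcm(2, N₂)`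
or `N₁ ∈ {1, 2, 3, 4, 6}`. -/
theorem realCycloField_le (N₁ N₂ : ℕ) (h₁ : 0 < N₁) (h₂ : 0 < N₂)
    (h : realCycloField N₁ ≤ realCycloField N₂) :
    N₁ ∣ Nat.lcm 2 N₂ ∨ N₁ ∈ ({1, 2, 3, 4, 6} : Set ℕ) :=
  dvd_lcm_two_or_mem_of_forall_modEq h₁ h₂ fun _ ha haN₂ =>
    modEq_one_or_dvd_add_one_of_realCycloField_le h₁ h₂ h ha haN₂
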